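/- arXiv:1309.7109 — 7 statements merged into one kernel-verified Lean document; each statement's English description precedes it below -/
import Mathlib

section
/- For a differentiable strictly convex function F : ℝ → ℝ, the limit as α → 0 of (1/(α(1-α))) J'_α(p:q) equals the Bregman divergence B(p:q) = F(p) - F(q) - (p-q)F'(q). -/
/-!
Writing `g α = F (α p + (1 - α) q)`, one has `J'_α(p:q) / α = F p - F q - (g α - g 0) / α`, and the
difference quotient tends to `g'(0) = (p - q) F'(q)`; the remaining factor `1 / (1 - α)` tends to `1`.
-/

open Filter Topology

lemma hasDerivAt_comp_segment_zero {F : ℝ → ℝ} {F' p q : ℝ} (hF : HasDerivAt F F' q) :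
    HasDerivAt (fun α : ℝ => F (α * p + (1 - α) * q)) ((p - q) * F') 0 := by
  have hsegment : HasDerivAt (fun α : ℝ => α * p + (1 - α) * q) (p - q) 0 := by
    have h : HasDerivAt (fun α : ℝ => α * p + (1 - α) * q) (1 * p + (0 - 1) * q) 0 :=
      ((hasDerivAt_id 0).mul_const p).add
        (((hasDerivAt_const 0 (1 : ℝ)).sub (hasDerivAt_id 0)).mul_const q)
    rwa [one_mul, zero_sub, neg_one_mul, ← sub_eq_add_neg] at h
  rw [mul_comm]
  exact (by simpa using hF : HasDerivAt F F' (0 * p + (1 - 0) * q)).comp 0 hsegment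

lemma tendsto_skewJensen_div_self {F : ℝ → ℝ} {F' p q : ℝ} (hF : HasDerivAt F F' q) :
    Tendsto (fun α : ℝ => (α * F p + (1 - α) * F q - F (α * p + (1 - α) * q)) / α)
      (𝓝[≠] 0) (𝓝 (F p - F q - (p - q) * F')) := by
  have hslope := hasDerivAt_iff_tendsto_slope.mp (hasDerivAt_comp_segment_zero (p := p) hF)
  refine ((tendsto_const_nhds (x := F p - F q)).sub hslope).congr' ?_
  filter_upwards [self_mem_nhdsWithin] with α (hα : α ≠ 0)
  rw [slope_def_field, zero_mul, sub_zero, one_mul, zero_add, sub_zero]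
  field_simp
  ring

theorem skew_jensen_tendsto_bregman_zero_general
    (F : ℝ → ℝ) (hdiff : Differentiable ℝ F)
    (p q : ℝ) :
    Tendsto
      (fun α : ℝ => (1 / (α * (1 - α))) *
        (α * F p + (1 - α) * F q - F (α * p + (1 - α) * q)))
      (𝓝[Set.Ioo (0 : ℝ) 1] 0)
      (𝓝 (F p - F q - (p - q) * deriv F q)) := by
  have hfilter : 𝓝[Set.Ioo (0 : ℝ) 1] 0 ≤ 𝓝[≠] 0 :=
    nhdsWithin_mono 0 fun α hα => hα.1.ne'
  have hgap := (tendsto_skewJensen_div_self (p := p) (hdiff q).hasDerivAt).mono_left hfilter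
  have hinv : Tendsto (fun α : ℝ => 1 / (1 - α)) (𝓝[Set.Ioo (0 : ℝ) 1] 0) (𝓝 1) := by
    simpa using ((continuous_const.sub continuous_id).tendsto' (0 : ℝ) 1 (by simp)).inv₀
      one_ne_zero |>.mono_left nhdsWithin_le_nhds
  refine (one_mul (F p - F q - (p - q) * deriv F q) ▸ hinv.mul hgap).congr' ?_
  filter_upwards [self_mem_nhdsWithin] with α hα
  rw [one_div_mul_eq_div, ← div_div, div_eq_mul_one_div _ (1 - α)]
  ring

/-- As α → 0⁺, the scaled skew Jensen divergence tends to the Bregman divergence B(p:q). -/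
theorem skew_jensen_tendsto_bregman_zero
    (F : ℝ → ℝ) (hF : StrictConvexOn ℝ Set.univ F) (hdiff : Differentiable ℝ F)
    (p q : ℝ) :
    Tendsto
      (fun α : ℝ => (1 / (α * (1 - α))) *
        (α * F p + (1 - α) * F q - F (α * p + (1 - α) * q)))
      (𝓝[Set.Ioo (0 : ℝ) 1] 0)
      (𝓝 (F p - F q - (p - q) * deriv F q)) :=
  skew_jensen_tendsto_bregman_zero_general F hdiff p q
end

section
/- For a differentiable strictly convex function F : ℝ → ℝ, the limit as α → 1 of (1/(α(1-α))) J'_α(p:q) equals the reverse Bregman divergence B(q:p) = F(q) - F(p) - (q-p)F'(p). -/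
open Filter Topology

/-! Divided by `α (1 - α)`, the skew Jensen divergence equals `(1 / α) (F q - F p - s (1 - α))`,
where `s t = (F (p + t (q - p)) - F p) / t` is a difference quotient of `F` along the segment
from `p` to `q`. As `α → 1`, `s (1 - α) → (q - p) F'(p)` and `1 / α → 1`. -/

theorem hasDerivAt_comp_add_mul_sub {F : ℝ → ℝ} {F' p : ℝ} (hF : HasDerivAt F F' p) (q : ℝ) :
    HasDerivAt (fun t => F (p + t * (q - p))) ((q - p) * F') 0 := by
  have hline : HasDerivAt (fun t : ℝ => p + t * (q - p)) (q - p) 0 := by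
    simpa using ((hasDerivAt_id (0 : ℝ)).mul_const (q - p)).const_add p
  have hF0 : HasDerivAt F F' (p + 0 * (q - p)) := by simpa using hF
  rw [mul_comm]
  exact hF0.comp 0 hline

theorem one_div_mul_skewJensen_eq (F : ℝ → ℝ) (p q : ℝ) {α : ℝ} (hα₀ : α ≠ 0)
    (hα₁ : 1 - α ≠ 0) :
    1 / (α * (1 - α)) * (α * F p + (1 - α) * F q - F (α * p + (1 - α) * q)) =
      1 / α * (F q - F p - slope (fun t => F (p + t * (q - p))) 0 (1 - α)) := by
  have hpoint : p + (1 - α) * (q - p) = α * p + (1 - α) * q := by ring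
  rw [slope_def_field]
  simp only [sub_zero, zero_mul, add_zero, hpoint]
  field_simp
  ring

theorem tendsto_one_sub_nhdsWithin_Ioo_one :
    Tendsto (fun α : ℝ => 1 - α) (𝓝[Set.Ioo 0 1] 1) (𝓝[≠] 0) := by
  refine tendsto_nhdsWithin_of_tendsto_nhds_of_eventually_within _ ?_ ?_
  · simpa using ((continuous_sub_left (1 : ℝ)).tendsto 1).mono_left nhdsWithin_le_nhds
  · filter_upwards [self_mem_nhdsWithin] with α hα
    exact sub_ne_zero.mpr hα.2.ne'

theorem skew_jensen_tendsto_bregman_one_general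
    (F : ℝ → ℝ) (hdiff : Differentiable ℝ F)
    (p q : ℝ) :
    Tendsto
      (fun α : ℝ => (1 / (α * (1 - α))) *
        (α * F p + (1 - α) * F q - F (α * p + (1 - α) * q)))
      (𝓝[Set.Ioo (0 : ℝ) 1] 1)
      (𝓝 (F q - F p - (q - p) * deriv F p)) := by
  have hslope := hasDerivAt_iff_tendsto_slope.mp
    (hasDerivAt_comp_add_mul_sub (hdiff p).hasDerivAt q)
  have hinv : Tendsto (fun α : ℝ => 1 / α) (𝓝[Set.Ioo 0 1] 1) (𝓝 1) := by
    have hcont : ContinuousAt (fun α : ℝ => 1 / α) 1 :=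
      continuousAt_const.div continuousAt_id one_ne_zero
    simpa only [div_one] using hcont.tendsto.mono_left nhdsWithin_le_nhds
  have hlim := hinv.mul
    ((tendsto_const_nhds (x := F q - F p)).sub (hslope.comp tendsto_one_sub_nhdsWithin_Ioo_one))
  rw [one_mul] at hlim
  refine hlim.congr' ?_
  filter_upwards [self_mem_nhdsWithin] with α hα
  exact (one_div_mul_skewJensen_eq F p q hα.1.ne' (sub_ne_zero.mpr hα.2.ne')).symm

/-- As α → 1⁻, the scaled skew Jensen divergence tends to the reverse Bregman divergence B(q:p). -/
theorem skew_jensen_tendsto_bregman_one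
    (F : ℝ → ℝ) (hF : StrictConvexOn ℝ Set.univ F) (hdiff : Differentiable ℝ F)
    (p q : ℝ) :
    Tendsto
      (fun α : ℝ => (1 / (α * (1 - α))) *
        (α * F p + (1 - α) * F q - F (α * p + (1 - α) * q)))
      (𝓝[Set.Ioo (0 : ℝ) 1] 1)
      (𝓝 (F q - F p - (q - p) * deriv F p)) :=
  skew_jensen_tendsto_bregman_one_general F hdiff p q
end

section
/- The Euclidean distance from the point ((pq)_α, F((pq)_α)) to the line through (p, F(p)) and (q, F(q)) in ℝ^{d+1} equals ρ_J(p,q)·J'_α(p:q), where ρ_J(p,q) = 1/√(1 + (F(p)-F(q))²/‖p-q‖²) and J'_α(p:q) = αF(p)+(1-α)F(q)-F(αp+(1-α)q). -/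
/-!
The point `(m, α F p + (1 - α) F q)` lies on the chord, vertically above `(m, F m)` at height
`J'_α(p:q) ≥ 0` (Jensen). A vertical offset `h` from a line with direction `(p - q, F p - F q)` is
at distance `|h|` times the sine of the angle between the line and the vertical, which is
`‖p - q‖ / √(‖p - q‖² + (F p - F q)²) = ρ_J(p,q)`.
-/

open RealInnerProductSpace Metric

section

variable {E : Type*} [NormedAddCommGroup E] [InnerProductSpace ℝ E]

theorem infDist_eq_dist_of_sub_mem_orthogonal {s : AffineSubspace ℝ E} {x y : E} (hy : y ∈ s)
    (hxy : x - y ∈ s.directionᗮ) : infDist x s = dist x y := by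
  refine le_antisymm (infDist_le_dist_of_mem hy) ((le_infDist ⟨y, hy⟩).2 fun z hz => ?_)
  have hperp : ⟪z - y, x - y⟫ = 0 :=
    Submodule.inner_right_of_mem_orthogonal (AffineSubspace.vsub_mem_direction hz hy) hxy
  rw [dist_eq_norm, dist_eq_norm, ← sub_sub_sub_cancel_right x z y]
  refine le_of_pow_le_pow_left₀ two_ne_zero (norm_nonneg _) ?_
  rw [norm_sub_sq_real (x - y) (z - y), real_inner_comm, hperp]
  nlinarith [sq_nonneg ‖z - y‖]

theorem infDist_affineSpan_pair_sq {A B y : E} (hy : y ∈ line[ℝ, A, B]) (x : E) :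
    infDist x (line[ℝ, A, B] : Set E) ^ 2 = ‖x - y‖ ^ 2 - ⟪x - y, A - B⟫ ^ 2 / ‖A - B‖ ^ 2 := by
  -- `t • (A - B) + y` is the foot of the perpendicular; for `A = B` the junk value `t = 0` is right.
  set t := ⟪x - y, A - B⟫ / ‖A - B‖ ^ 2
  have hdir : (line[ℝ, A, B]).direction = ℝ ∙ (A - B) := by
    rw [direction_affineSpan, vectorSpan_pair, vsub_eq_sub]
  have hfoot : t • (A - B) + y ∈ line[ℝ, A, B] :=
    AffineSubspace.vadd_mem_of_mem_direction
      (hdir ▸ Submodule.smul_mem _ t (Submodule.mem_span_singleton_self _)) hy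
  have hcoef : t * ‖A - B‖ ^ 2 = ⟪x - y, A - B⟫ :=
    div_mul_cancel_of_imp fun h => by simp [sub_eq_zero.1 (by simpa using h)]
  have hperp : x - (t • (A - B) + y) ∈ (line[ℝ, A, B]).directionᗮ := by
    rw [hdir, Submodule.mem_orthogonal_singleton_iff_inner_right, sub_add_eq_sub_sub_swap,
      inner_sub_right, real_inner_smul_right, real_inner_self_eq_norm_sq, real_inner_comm, hcoef,
      sub_self]
  have hquot : ⟪x - y, A - B⟫ ^ 2 / ‖A - B‖ ^ 2 = t * ⟪x - y, A - B⟫ := by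
    rw [div_mul_eq_mul_div, sq]
  rw [infDist_eq_dist_of_sub_mem_orthogonal hfoot hperp, dist_eq_norm, sub_add_eq_sub_sub_swap,
    norm_sub_sq_real, real_inner_smul_right, norm_smul, mul_pow, Real.norm_eq_abs, sq_abs, hquot,
    ← hcoef]
  ring

theorem infDist_vertical_offset_sq {p q m : E} {a b s : ℝ} (hpq : p ≠ q)
    (hy : WithLp.toLp 2 (m, s) ∈ line[ℝ, WithLp.toLp 2 (p, a), WithLp.toLp 2 (q, b)]) (t : ℝ) :
    infDist (WithLp.toLp 2 (m, t))
        (line[ℝ, WithLp.toLp 2 (p, a), WithLp.toLp 2 (q, b)] : Set (WithLp 2 (E × ℝ))) ^ 2 =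
      (t - s) ^ 2 * ‖p - q‖ ^ 2 / (‖p - q‖ ^ 2 + (a - b) ^ 2) := by
  have hN : ‖p - q‖ ^ 2 ≠ 0 := by positivity [sub_ne_zero.2 hpq]
  rw [infDist_affineSpan_pair_sq hy, ← WithLp.toLp_sub, ← WithLp.toLp_sub, Prod.mk_sub_mk,
    Prod.mk_sub_mk, WithLp.prod_norm_sq_eq_of_L2, WithLp.prod_norm_sq_eq_of_L2,
    WithLp.prod_inner_apply]
  simp only [sub_self, WithLp.toLp_fst, WithLp.toLp_snd, norm_zero,
    inner_zero_left, Real.inner_apply, Real.norm_eq_abs, sq_abs, zero_add]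
  field_simp
  ring

end

/-- The Euclidean distance from ((pq)_α, F((pq)_α)) to the line through (p,F(p)) and (q,F(q))
equals ρ_J(p,q) · J'_α(p:q). -/
theorem total_jensen_as_dist_to_chord
    (d : ℕ) (F : EuclideanSpace ℝ (Fin d) → ℝ)
    (hF : ConvexOn ℝ Set.univ F)
    (p q : EuclideanSpace ℝ (Fin d)) (hpq : p ≠ q)
    (α : ℝ) (hα : α ∈ Set.Ioo (0 : ℝ) 1) :
    let pt : EuclideanSpace ℝ (Fin d) × ℝ → WithLp 2 (EuclideanSpace ℝ (Fin d) × ℝ) :=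
      (WithLp.equiv 2 (EuclideanSpace ℝ (Fin d) × ℝ)).symm
    let m : EuclideanSpace ℝ (Fin d) := α • p + (1 - α) • q
    Metric.infDist (pt (m, F m))
        (↑(affineSpan ℝ {pt (p, F p), pt (q, F q)}) : Set (WithLp 2 (EuclideanSpace ℝ (Fin d) × ℝ)))
      = (1 / Real.sqrt (1 + (F p - F q) ^ 2 / ‖p - q‖ ^ 2)) *
          (α * F p + (1 - α) * F q - F m) := by
  intro pt m
  simp only [pt, WithLp.equiv_symm_apply]
  obtain ⟨hα0, hα1⟩ := hα
  have hJensen : 0 ≤ α * F p + (1 - α) * F q - F m :=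
    sub_nonneg.2 (hF.2 trivial trivial hα0.le (sub_nonneg.2 hα1.le) (by ring))
  have hchord : WithLp.toLp 2 (m, α * F p + (1 - α) * F q) ∈
      line[ℝ, WithLp.toLp 2 (p, F p), WithLp.toLp 2 (q, F q)] := by
    convert AffineMap.lineMap_mem_affineSpan_pair (1 - α) (WithLp.toLp 2 (p, F p))
      (WithLp.toLp 2 (q, F q)) using 1
    rw [AffineMap.lineMap_apply_module, ← WithLp.toLp_smul, ← WithLp.toLp_smul, ← WithLp.toLp_add]
    simp [m]
  have hN : ‖p - q‖ ≠ 0 := norm_ne_zero_iff.2 (sub_ne_zero.2 hpq)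
  rw [← sq_eq_sq₀ infDist_nonneg (by positivity), infDist_vertical_offset_sq hpq hchord,
    mul_pow, div_pow, one_pow, Real.sq_sqrt (by positivity)]
  field_simp
  ring
end

section
/- For a strictly convex differentiable F : ℝ → ℝ, the intermediate point ε with ρ_J(p,q) = ρ_B(ε) is unique and given by ε = (F')^{-1}((F(p)-F(q))/(p-q)), the Stolarsky mean of p and q with respect to F'. -/
/-! Existence of ε is the mean value theorem on the segment between `p` and `q`; uniqueness holds
because the derivative of a differentiable strictly convex function is strictly increasing,
hence injective. -/

open Set

theorem exists_deriv_eq_slope_of_ne {f : ℝ → ℝ} (hf : Differentiable ℝ f) {a b : ℝ}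
    (hab : a ≠ b) : ∃ c, deriv f c = slope f a b := by
  have hfd : ∀ s, DifferentiableOn ℝ f s := fun _ => hf.differentiableOn
  rcases hab.lt_or_gt with h | h
  · obtain ⟨c, -, hc⟩ := exists_deriv_eq_slope' f h hf.continuous.continuousOn (hfd _)
    exact ⟨c, hc⟩
  · obtain ⟨c, -, hc⟩ := exists_deriv_eq_slope' f h hf.continuous.continuousOn (hfd _)
    exact ⟨c, hc.trans (slope_comm f b a)⟩

theorem StrictConvexOn.deriv_injective {f : ℝ → ℝ} (hfc : StrictConvexOn ℝ univ f)
    (hf : Differentiable ℝ f) : Function.Injective (deriv f) :=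
  injOn_univ.mp (hfc.strictMonoOn_deriv fun x _ => hf x).injOn

/-- For strictly convex differentiable F, the intermediate point ε with
F'(ε) equal to the chord slope (the Stolarsky mean) is unique, and at it the
Jensen and Bregman conformal factors agree. -/
theorem stolarsky_mean_unique
    (F : ℝ → ℝ) (hdiff : Differentiable ℝ F) (hF : StrictConvexOn ℝ Set.univ F)
    (p q : ℝ) (hpq : p ≠ q) :
    ∃! ε : ℝ, deriv F ε = (F p - F q) / (p - q) ∧
      1 / Real.sqrt (1 + (deriv F ε) ^ 2)
        = 1 / Real.sqrt (1 + ((F p - F q) / (p - q)) ^ 2) := by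
  obtain ⟨c, hc⟩ := exists_deriv_eq_slope_of_ne hdiff hpq
  rw [slope_comm, slope_def_field] at hc
  exact ⟨c, ⟨hc, by rw [hc]⟩, fun y hy => hF.deriv_injective hdiff (hy.1.trans hc.symm)⟩
end

section
/- For the Shannon generator f(x) = x log x - x on ℝ⁺, the influence function of the symmetric Jensen centroid, z(y) = 2(f'((p+y)/2) - f'(p))/f''(p) = 2p·log((p+y)/(2p)), is unbounded as y → ∞; hence the Jensen-Shannon centroid is not robust. -/
open Filter

lemma Real.tendsto_log_add_div_atTop (a : ℝ) {b : ℝ} (hb : 0 < b) :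
    Tendsto (fun y => Real.log ((a + y) / b)) atTop atTop :=
  Real.tendsto_log_atTop.comp <|
    (tendsto_atTop_add_const_left _ _ tendsto_id).atTop_div_const hb

lemma Real.mul_log_sub_log_div_one_div {p x : ℝ} (hp : p ≠ 0) (hx : x ≠ 0) (c : ℝ) :
    c * (Real.log x - Real.log p) / (1 / p) = c * p * Real.log (x / p) := by
  rw [Real.log_div hx hp, div_div_eq_mul_div, div_one]
  ring

/-- For the Shannon generator f(x) = x log x - x, the influence function
z(y) = 2(f'((p+y)/2) - f'(p))/f''(p) = 2p log((p+y)/(2p)) is unbounded as y → ∞: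
the Jensen-Shannon centroid is not robust. -/
theorem jensen_shannon_influence_unbounded (p : ℝ) (hp : 0 < p) :
    let z : ℝ → ℝ := fun y => 2 * (Real.log ((p + y) / 2) - Real.log p) / (1 / p)
    (∀ y > 0, z y = 2 * p * Real.log ((p + y) / (2 * p))) ∧
      Tendsto z atTop atTop := by
  intro z
  have hz : ∀ y > 0, z y = 2 * p * Real.log ((p + y) / (2 * p)) := fun y hy => by
    simp only [z]
    rw [Real.mul_log_sub_log_div_one_div hp.ne' (by positivity), div_div, mul_comm 2 p]
  have h2p : 0 < 2 * p := by positivity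
  refine ⟨hz, ?_⟩
  exact ((Real.tendsto_log_add_div_atTop p h2p).const_mul_atTop h2p).congr'
    ((eventually_gt_atTop 0).mono fun y hy => (hz y hy).symm)
end

section
/- For the Burg generator f(x) = -log x on ℝ⁺, the influence function z(y) = 2p²(1/p - 2/(p+y)) is bounded on (0,∞): |z(y)| ≤ 2p for all y > 0, and z(y) → 2p as y → ∞; hence the Jensen-Burg centroid is robust. -/
open Filter Topology

/-! With `f' x = -1/x` and `f'' x = 1/x²` the influence function simplifies to
`z y = 2p - 4p²/(p+y)`. For `y ≥ 0` the subtracted term lies in `(0, 4p]`, so `z y ∈ [-2p, 2p)`,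
and it vanishes as `y → ∞`. -/

/-- The influence function `2 (f'((p+y)/2) - f'(p)) / f''(p)` of the Burg generator `f = -log`. -/
noncomputable def burgInfluence (p y : ℝ) : ℝ :=
  2 * ((-1 / ((p + y) / 2)) - (-1 / p)) / (1 / p ^ 2)

section

variable {p y : ℝ}

theorem burgInfluence_eq_sub (hp : p ≠ 0) (hpy : p + y ≠ 0) :
    burgInfluence p y = 2 * p - 4 * p ^ 2 / (p + y) := by
  unfold burgInfluence
  field_simp
  ring

theorem burgInfluence_eq (hp : p ≠ 0) (hpy : p + y ≠ 0) :
    burgInfluence p y = 2 * p ^ 2 * (1 / p - 2 / (p + y)) := by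
  rw [burgInfluence_eq_sub hp hpy]
  field_simp
  ring

theorem abs_burgInfluence_le (hp : 0 < p) (hy : 0 ≤ y) : |burgInfluence p y| ≤ 2 * p := by
  have hpy : 0 < p + y := by linarith
  rw [burgInfluence_eq_sub hp.ne' hpy.ne', abs_le]
  have h_pos : 0 < 4 * p ^ 2 / (p + y) := by positivity
  have h_le : 4 * p ^ 2 / (p + y) ≤ 4 * p := by
    rw [div_le_iff₀ hpy]
    nlinarith
  constructor <;> linarith

theorem tendsto_burgInfluence_atTop (hp : p ≠ 0) :
    Tendsto (burgInfluence p) atTop (𝓝 (2 * p)) := by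
  have h_tail : Tendsto (fun y => 4 * p ^ 2 / (p + y)) atTop (𝓝 0) :=
    tendsto_const_nhds.div_atTop (tendsto_atTop_add_const_left _ _ tendsto_id)
  have h_lim : Tendsto (fun y => 2 * p - 4 * p ^ 2 / (p + y)) atTop (𝓝 (2 * p)) := by
    simpa using tendsto_const_nhds.sub h_tail
  refine h_lim.congr' ?_
  filter_upwards [eventually_gt_atTop (-p)] with y hy
  exact (burgInfluence_eq_sub hp (by linarith)).symm

end

/-- For the Burg generator f(x) = -log x, the influence function
z(y) = 2(f'((p+y)/2) - f'(p))/f''(p) = 2p²(1/p - 2/(p+y)) is bounded by 2p and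
tends to 2p as y → ∞: the Jensen-Burg centroid is robust. -/
theorem jensen_burg_influence_bounded (p : ℝ) (hp : 0 < p) :
    let z : ℝ → ℝ := fun y => 2 * ((-1 / ((p + y) / 2)) - (-1 / p)) / (1 / p ^ 2)
    (∀ y > 0, z y = 2 * p ^ 2 * (1 / p - 2 / (p + y))) ∧
      (∀ y > 0, |z y| ≤ 2 * p) ∧
      Tendsto z atTop (𝓝 (2 * p)) :=
  ⟨fun _ hy => burgInfluence_eq hp.ne' (by positivity),
    fun _ hy => abs_burgInfluence_le hp hy.le,
    tendsto_burgInfluence_atTop hp.ne'⟩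
end

section
/- For the Shannon generator, the total Jensen conformal factor satisfies ρ_J(p,y)·log y → 1 as y → ∞ (for fixed p > 0), i.e., ρ_J(p,y) ~ 1/log y. -/
open Filter Topology

/-! The secant slope `s y` of `F x = x log x - x` between `p` and `y` grows like `F' y = log y`,
so `ρ_J(p, y) · log y = 1 / √((log y)⁻² + (s y / log y)²) → 1 / √(0 + 1) = 1`. -/

theorem tendsto_one_div_sqrt_one_add_sq_mul {α : Type*} {l : Filter α} {f g : α → ℝ}
    (hf : Tendsto f l atTop) (hgf : Tendsto (fun x => g x / f x) l (𝓝 1)) :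
    Tendsto (fun x => 1 / Real.sqrt (1 + g x ^ 2) * f x) l (𝓝 1) := by
  have hlim : Tendsto (fun x => 1 / Real.sqrt ((f x)⁻¹ ^ 2 + (g x / f x) ^ 2)) l (𝓝 1) := by
    have h := ((hf.inv_tendsto_atTop.pow 2).add (hgf.pow 2)).sqrt.inv₀ (by norm_num)
    simpa [one_div] using h
  refine hlim.congr' ?_
  filter_upwards [hf.eventually_gt_atTop 0] with x hx
  have hsq : (f x)⁻¹ ^ 2 + (g x / f x) ^ 2 = (1 + g x ^ 2) / f x ^ 2 := by
    field_simp
  rw [hsq, Real.sqrt_div (by positivity), Real.sqrt_sq hx.le, one_div_div]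
  ring

-- With `C = F p` the function below is the secant slope `(F p - F y) / (p - y)`.
theorem tendsto_secant_slope_div_log (C p : ℝ) :
    Tendsto (fun y => (C - y * Real.log y + y) / (p - y) / Real.log y) atTop (𝓝 1) := by
  have hlog := Real.tendsto_log_atTop
  have hnum : Tendsto (fun y => 1 - 1 / Real.log y - C / (y * Real.log y)) atTop (𝓝 1) := by
    have h := (tendsto_const_nhds (x := (1 : ℝ))).sub
      ((tendsto_const_nhds (x := (1 : ℝ))).div_atTop hlog) |>.sub
      ((tendsto_const_nhds (x := C)).div_atTop (tendsto_id.atTop_mul_atTop₀ hlog))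
    simpa using h
  have hden : Tendsto (fun y => 1 - p / y) atTop (𝓝 1) := by
    simpa using (tendsto_const_nhds (x := (1 : ℝ))).sub
      ((tendsto_const_nhds (x := p)).div_atTop tendsto_id)
  have hlim := hnum.div hden one_ne_zero
  rw [div_one] at hlim
  refine hlim.congr' ?_
  filter_upwards [eventually_gt_atTop (max p 1)] with y hy
  have hy1 : 1 < y := lt_of_le_of_lt (le_max_right p 1) hy
  have hyp : y - p ≠ 0 := sub_ne_zero.mpr (lt_of_le_of_lt (le_max_left p 1) hy).ne'
  have hlogy : Real.log y ≠ 0 := (Real.log_pos hy1).ne'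
  have hy0 : y ≠ 0 := by positivity
  simp only [Pi.div_apply]
  rw [← neg_sub y p]
  field_simp
  ring

theorem shannon_conformal_factor_asymptotics_general (p : ℝ) :
    Tendsto
      (fun y : ℝ =>
        (1 / Real.sqrt (1 +
          ((p * Real.log p - p - y * Real.log y + y) / (p - y)) ^ 2)) * Real.log y)
      atTop (𝓝 1) :=
  tendsto_one_div_sqrt_one_add_sq_mul Real.tendsto_log_atTop
    (tendsto_secant_slope_div_log (p * Real.log p - p) p)

/-- For the Shannon generator, the total Jensen conformal factor satisfies
ρ_J(p,y) · log y → 1 as y → ∞, i.e. ρ_J(p,y) ~ 1/log y. -/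
theorem shannon_conformal_factor_asymptotics (p : ℝ) (hp : 0 < p) :
    Tendsto
      (fun y : ℝ =>
        (1 / Real.sqrt (1 +
          ((p * Real.log p - p - y * Real.log y + y) / (p - y)) ^ 2)) * Real.log y)
      atTop (𝓝 1) :=
  shannon_conformal_factor_asymptotics_general p
end
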